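/- With W as in the previous construction (w_{1i} = 1/(n-1) for i≠1, w_{2i} = 1/(n-1) for i≠2, w_{j1} = 1-δ, w_{j2} = δ for j > 2), the influence vector has first coefficient x = (n-1)(n-1-α(1-δ)(n-2)-δ(n-2))/(n(2n-3-α(n-2))), second coefficient y = (n-1)((1-α)δ(n-2)+1)/(n(2n-3-α(n-2))), and all remaining coefficients equal to z = (n-α)/(n(2n-3-α(n-2))). -/

import Mathlib

open Matrix BigOperators

/-!
Since `W` is row-stochastic, the `ℓ∞` operator norm of `(1 - α) • W` is `1 - α < 1`, so
`1 - (1 - α) • Wᵀ` is invertible and the influence vector is the unique solution of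
`v = (1 - α) • Wᵀ v + α / n`. The matrix `Wᵀ` maps vectors of the form `(x, y, z, …, z)` to
vectors of the same form, so this equation reduces to a `3 × 3` linear system in `x, y, z`,
whose solution is the one claimed.
-/

noncomputable def influence {n : ℕ} (α : ℝ) (W : Matrix (Fin n) (Fin n) ℝ) : Fin n → ℝ :=
  (α / (n : ℝ)) • ((1 - (1 - α) • Wᵀ)⁻¹ *ᵥ fun _ => 1)

section

attribute [local instance] Matrix.linftyOpNormedRing Matrix.linftyOpNormedAlgebra

theorem isUnit_one_sub_smul_transpose {ι : Type*} [Fintype ι] [DecidableEq ι]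
    {W : Matrix ι ι ℝ} (hW : ∀ i, ∑ j, |W i j| ≤ 1) {β : ℝ} (hβ : |β| < 1) :
    IsUnit (1 - β • Wᵀ) := by
  have hnorm : ‖W‖ ≤ 1 := by
    rw [← NNReal.coe_one, linfty_opNorm_def, NNReal.coe_le_coe, Finset.sup_le_iff]
    intro i _
    rw [← NNReal.coe_le_coe]
    simpa using hW i
  have hlt : ‖β • W‖ < 1 :=
    calc ‖β • W‖ ≤ |β| * ‖W‖ := by simpa using norm_smul_le β W
      _ ≤ |β| := mul_le_of_le_one_right (abs_nonneg β) hnorm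
      _ < 1 := hβ
  rw [← isUnit_transpose, transpose_sub, transpose_one, transpose_smul, transpose_transpose]
  exact isUnit_one_sub_of_norm_lt_one hlt

end

theorem influence_eq_of_isFixedPt {n : ℕ} {α : ℝ} {W : Matrix (Fin n) (Fin n) ℝ}
    (hW : IsUnit (1 - (1 - α) • Wᵀ)) {v : Fin n → ℝ}
    (hv : Function.IsFixedPt (fun u => (1 - α) • (Wᵀ *ᵥ u) + fun _ => α / n) v) :
    influence α W = v := by
  have := hW.invertible
  have hMv : (α / n) • (fun _ => (1 : ℝ)) = (1 - (1 - α) • Wᵀ) *ᵥ v := by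
    rw [sub_mulVec, one_mulVec, smul_mulVec, sub_eq_of_eq_add' hv.eq.symm]
    ext; simp
  rw [influence, ← mulVec_smul, inv_mulVec_eq_vec hMv]

def firstSecondRest {n : ℕ} {R : Type*} (a b c : R) : Fin n → R :=
  fun j => if j.val = 0 then a else if j.val = 1 then b else c

noncomputable def constructionMatrix (n : ℕ) (δ : ℝ) : Matrix (Fin n) (Fin n) ℝ :=
  of fun i j =>
    if i.val = 0 then (if j.val = 0 then 0 else 1 / ((n : ℝ) - 1))
    else if i.val = 1 then (if j.val = 1 then 0 else 1 / ((n : ℝ) - 1))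
    else if j.val = 0 then 1 - δ else if j.val = 1 then δ else 0

theorem constructionMatrix_abs_row_sum {n : ℕ} (hn : 2 ≤ n) {δ : ℝ} (hδ0 : 0 ≤ δ) (hδ1 : δ ≤ 1)
    (i : Fin n) : ∑ j, |constructionMatrix n δ i j| = 1 := by
  obtain ⟨m, rfl⟩ : ∃ m, n = m + 2 := ⟨n - 2, by omega⟩
  simp only [constructionMatrix, Fin.val_eq_zero_iff, Nat.cast_add, Nat.cast_ofNat, one_div,
    of_apply, Fin.sum_univ_succ, ↓reduceIte, Fin.coe_ofNat_eq_mod, Nat.zero_mod, zero_ne_one,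
    Fin.succ_ne_zero, Fin.val_succ, Nat.add_eq_right, Finset.sum_const, Finset.card_univ,
    Fintype.card_fin, nsmul_eq_mul]
  have hm : (0 : ℝ) < (m : ℝ) + 2 - 1 := by linarith [(m.cast_nonneg : (0 : ℝ) ≤ m)]
  split_ifs <;> simp [abs_of_nonneg, hδ0, hδ1, hm.le] <;> field_simp <;> ring

theorem constructionMatrix_transpose_mulVec {n : ℕ} (hn : 2 ≤ n) (δ x y z : ℝ) :
    (constructionMatrix n δ)ᵀ *ᵥ firstSecondRest x y z =
      firstSecondRest (y / (n - 1) + (n - 2) * (1 - δ) * z) (x / (n - 1) + (n - 2) * δ * z)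
        ((x + y) / (n - 1)) := by
  obtain ⟨m, rfl⟩ : ∃ m, n = m + 2 := ⟨n - 2, by omega⟩
  ext i
  simp only [mulVec, dotProduct, constructionMatrix, Fin.val_eq_zero_iff, Nat.cast_add,
    Nat.cast_ofNat, one_div, transpose_apply, of_apply, firstSecondRest, mul_ite, ite_mul, zero_mul,
    Fin.sum_univ_succ, ↓reduceIte, Fin.succ_ne_zero, Fin.val_succ, Nat.add_eq_right,
    Finset.sum_ite_irrel, Finset.sum_const, Finset.card_univ, Fintype.card_fin, nsmul_eq_mul,
    add_sub_cancel_right]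
  split_ifs <;> simp_all [div_eq_inv_mul] <;> ring

/-- Exact coefficients of the influence vector for the construction `W` with rows
`1,2` uniform and rows `j > 2` weighted `1-δ` to firm `1` and `δ` to firm `2`. -/
theorem influence_construction_coefficients (n : ℕ) (hn : 2 < n) (α δ : ℝ)
    (hα0 : 0 < α) (hα1 : α < 1) (hδ0 : 0 ≤ δ) (hδ1 : δ < 1)
    (W : Matrix (Fin n) (Fin n) ℝ)
    (hW : ∀ i j : Fin n, W i j =
      if i.val = 0 then (if j.val = 0 then 0 else 1 / ((n : ℝ) - 1))
      else if i.val = 1 then (if j.val = 1 then 0 else 1 / ((n : ℝ) - 1))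
      else if j.val = 0 then 1 - δ else if j.val = 1 then δ else 0) :
    influence α W ⟨0, by omega⟩ =
      ((n : ℝ) - 1) * ((n : ℝ) - 1 - α * (1 - δ) * ((n : ℝ) - 2) - δ * ((n : ℝ) - 2)) /
        ((n : ℝ) * (2 * (n : ℝ) - 3 - α * ((n : ℝ) - 2))) ∧
    influence α W ⟨1, by omega⟩ =
      ((n : ℝ) - 1) * ((1 - α) * δ * ((n : ℝ) - 2) + 1) /
        ((n : ℝ) * (2 * (n : ℝ) - 3 - α * ((n : ℝ) - 2))) ∧
    ∀ j : Fin n, 2 ≤ j.val →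
      influence α W j = ((n : ℝ) - α) / ((n : ℝ) * (2 * (n : ℝ) - 3 - α * ((n : ℝ) - 2))) := by
  obtain rfl : W = constructionMatrix n δ := Matrix.ext hW
  have hn3 : (3 : ℝ) ≤ n := by exact_mod_cast hn
  set D := 2 * (n : ℝ) - 3 - α * ((n : ℝ) - 2) with hDdef
  have hD : 0 < D := by nlinarith
  have hunit : IsUnit (1 - (1 - α) • (constructionMatrix n δ)ᵀ) :=
    isUnit_one_sub_smul_transpose
      (fun i => (constructionMatrix_abs_row_sum hn.le hδ0 hδ1.le i).le)
      (abs_lt.mpr ⟨by linarith, by linarith⟩)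
  have hinf : influence α (constructionMatrix n δ) = firstSecondRest
      (((n : ℝ) - 1) * ((n : ℝ) - 1 - α * (1 - δ) * ((n : ℝ) - 2) - δ * ((n : ℝ) - 2)) / (n * D))
      (((n : ℝ) - 1) * ((1 - α) * δ * ((n : ℝ) - 2) + 1) / (n * D))
      (((n : ℝ) - α) / (n * D)) := by
    refine influence_eq_of_isFixedPt hunit ?_
    have hn1 : (n : ℝ) - 1 ≠ 0 := by linarith
    have hn0 : (n : ℝ) ≠ 0 := by linarith
    funext j
    simp only [constructionMatrix_transpose_mulVec hn.le, firstSecondRest, Pi.add_apply,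
      Pi.smul_apply, smul_eq_mul]
    split_ifs <;> field_simp <;> rw [hDdef] <;> ring
  refine ⟨by simp [hinf, firstSecondRest], by simp [hinf, firstSecondRest], fun j hj => ?_⟩
  simp [hinf, firstSecondRest, show j.val ≠ 0 by omega, show j.val ≠ 1 by omega]
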